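/- Let $\xi$ be a transcendental real number, $n$ a positive integer, and $(P_i)_{i \geq 0}$ a sequence of minimal polynomials associated to $n$ and $\xi$. If for integers $0 \leq i < j$ the real span of $P_i, P_{i+1}, \dots, P_j$ has dimension $2$, then $S_{j-1} = \pm S_i$, where $S_k = P_k(\xi) P_{k+1} - P_{k+1}(\xi) P_k$. -/

import Mathlib

/-!
Two consecutive minimal polynomials `P k`, `P (k + 1)` are linearly independent, and every integer
polynomial of degree at most `n` in their real span is an integer combination of them: rounding
the real coefficients would otherwise produce a polynomial smaller than `P k` at `ξ` of height
less than that of `P (k + 1)`. Hence, in a plane `V`, consecutive pairs `(P k, P (k + 1))` are all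
bases of the same lattice `V ∩ ℤ[X]`. Writing `P (k + 2) = a P k + b P (k + 1)`, unimodularity
forces `a = ± 1`, and a direct computation gives `S (k + 1) = -a S k`.
-/

open Polynomial

/-- Naive height of an integer polynomial, as a real number. -/
noncomputable def heightZ (P : Polynomial ℤ) : ℝ := ⨆ i : ℕ, |(P.coeff i : ℝ)|

/-- The real polynomial obtained from an integer polynomial. -/
noncomputable def toR (P : Polynomial ℤ) : Polynomial ℝ := P.map (Int.castRingHom ℝ)

/-- A sequence of minimal polynomials associated to `n` and `ξ`. -/
def IsMinimalSeq (n : ℕ) (ξ : ℝ) (P : ℕ → Polynomial ℤ) : Prop :=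
  (∀ i, P i ≠ 0) ∧ (∀ i, (P i).natDegree ≤ n) ∧
  (∀ i, heightZ (P i) < heightZ (P (i + 1))) ∧
  (∀ i, |Polynomial.aeval ξ (P (i + 1))| < |Polynomial.aeval ξ (P i)|) ∧
  (∀ i, ∀ Q : Polynomial ℤ, Q ≠ 0 → Q.natDegree ≤ n →
    |Polynomial.aeval ξ Q| < |Polynomial.aeval ξ (P i)| → heightZ (P (i + 1)) ≤ heightZ Q)

lemma coeff_toR (P : ℤ[X]) (i : ℕ) : (toR P).coeff i = (P.coeff i : ℝ) := by
  simp [toR]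

lemma toR_zsmul_add_zsmul (a b : ℤ) (P Q : ℤ[X]) :
    toR (a • P + b • Q) = (a : ℝ) • toR P + (b : ℝ) • toR Q := by
  ext i
  simp [coeff_toR]

lemma toR_sub (P Q : ℤ[X]) : toR (P - Q) = toR P - toR Q :=
  Polynomial.map_sub _

lemma toR_ne_zero {P : ℤ[X]} (h : P ≠ 0) : toR P ≠ 0 :=
  (Polynomial.map_ne_zero_iff Int.cast_injective).mpr h

lemma aeval_eq_eval_toR (ξ : ℝ) (P : ℤ[X]) : aeval ξ P = (toR P).eval ξ := by
  rw [toR, aeval_def, eval₂_eq_eval_map]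
  rfl

lemma aeval_eq_of_toR_eq {ξ r s : ℝ} {Q P₁ P₂ : ℤ[X]} (h : toR Q = r • toR P₁ + s • toR P₂) :
    aeval ξ Q = r * aeval ξ P₁ + s * aeval ξ P₂ := by
  simp only [aeval_eq_eval_toR, h, eval_add, eval_smul, smul_eq_mul]

lemma bddAbove_abs_coeff (P : ℤ[X]) : BddAbove (Set.range fun i ↦ |(P.coeff i : ℝ)|) := by
  refine ⟨∑ k ∈ P.support, |(P.coeff k : ℝ)|, ?_⟩
  rintro _ ⟨i, rfl⟩
  by_cases hi : i ∈ P.support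
  · exact Finset.single_le_sum (f := fun k ↦ |(P.coeff k : ℝ)|) (fun _ _ ↦ abs_nonneg _) hi
  · show |(P.coeff i : ℝ)| ≤ _
    rw [notMem_support_iff.mp hi, Int.cast_zero, abs_zero]
    exact Finset.sum_nonneg fun _ _ ↦ abs_nonneg _

lemma abs_coeff_le_heightZ (P : ℤ[X]) (i : ℕ) : |(P.coeff i : ℝ)| ≤ heightZ P :=
  le_ciSup (bddAbove_abs_coeff P) i

lemma heightZ_pos {P : ℤ[X]} (h : P ≠ 0) : 0 < heightZ P := by
  obtain ⟨i, hi⟩ : ∃ i, P.coeff i ≠ 0 := by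
    by_contra! hc
    exact h (Polynomial.ext fun i ↦ by simp [hc i])
  calc (0 : ℝ) < |(P.coeff i : ℝ)| := by positivity
    _ ≤ heightZ P := abs_coeff_le_heightZ P i

lemma heightZ_le_of_toR_eq {r s : ℝ} {Q P₁ P₂ : ℤ[X]} (h : toR Q = r • toR P₁ + s • toR P₂) :
    heightZ Q ≤ |r| * heightZ P₁ + |s| * heightZ P₂ := by
  refine ciSup_le fun i ↦ ?_
  have hc : (Q.coeff i : ℝ) = r * P₁.coeff i + s * P₂.coeff i := by
    simpa [coeff_toR] using congrArg (coeff · i) h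
  calc |(Q.coeff i : ℝ)| ≤ |r| * |(P₁.coeff i : ℝ)| + |s| * |(P₂.coeff i : ℝ)| := by
        rw [hc, ← abs_mul, ← abs_mul]
        exact abs_add_le _ _
    _ ≤ |r| * heightZ P₁ + |s| * heightZ P₂ := by
        gcongr <;> exact abs_coeff_le_heightZ _ _

/-- `S_k = crossEval ξ (P k) (P (k + 1))` in the notation of the paper. -/
noncomputable def crossEval (ξ : ℝ) (P Q : ℤ[X]) : ℝ[X] := aeval ξ P • toR Q - aeval ξ Q • toR P

lemma crossEval_zsmul_add_zsmul (ξ : ℝ) (a b : ℤ) (P Q : ℤ[X]) :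
    crossEval ξ Q (a • P + b • Q) = (-a : ℝ) • crossEval ξ P Q := by
  rw [crossEval, crossEval, toR_zsmul_add_zsmul, map_add, map_zsmul, map_zsmul]
  module

lemma eq_or_eq_neg_of_forall_succ {G : Type*} [AddGroup G] {f : ℕ → G} {i j : ℕ} (hij : i ≤ j)
    (h : ∀ k, i ≤ k → k < j → f (k + 1) = f k ∨ f (k + 1) = -f k) : f j = f i ∨ f j = -f i := by
  induction j, hij using Nat.le_induction with
  | base => exact .inl rfl
  | succ k hik ih =>
    rcases ih fun m hm hmk ↦ h m hm (by omega) with ih | ih <;>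
      rcases h k hik (by omega) with hk | hk <;> simp [hk, ih]

namespace IsMinimalSeq

variable {n : ℕ} {ξ : ℝ} {P : ℕ → ℤ[X]}

lemma ne_zero (hP : IsMinimalSeq n ξ P) (k : ℕ) : P k ≠ 0 := hP.1 k

lemma natDegree_le (hP : IsMinimalSeq n ξ P) (k : ℕ) : (P k).natDegree ≤ n := hP.2.1 k

lemma heightZ_lt_succ (hP : IsMinimalSeq n ξ P) (k : ℕ) : heightZ (P k) < heightZ (P (k + 1)) :=
  hP.2.2.1 k

lemma abs_aeval_succ_lt (hP : IsMinimalSeq n ξ P) (k : ℕ) :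
    |aeval ξ (P (k + 1))| < |aeval ξ (P k)| :=
  hP.2.2.2.1 k

lemma heightZ_succ_le (hP : IsMinimalSeq n ξ P) (k : ℕ) {Q : ℤ[X]} (hQ : Q ≠ 0)
    (hQn : Q.natDegree ≤ n) (hlt : |aeval ξ Q| < |aeval ξ (P k)|) :
    heightZ (P (k + 1)) ≤ heightZ Q :=
  hP.2.2.2.2 k Q hQ hQn hlt

lemma aeval_ne_zero (hP : IsMinimalSeq n ξ P) (k : ℕ) : aeval ξ (P k) ≠ 0 :=
  abs_pos.mp ((abs_nonneg _).trans_lt (hP.abs_aeval_succ_lt k))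

/-- Such a `Q` would be smaller than `P k` at `ξ` but lower than `P (k + 1)` in height. -/
lemma not_toR_eq_small_comb (hP : IsMinimalSeq n ξ P) (k : ℕ) {Q : ℤ[X]} (hQ : Q ≠ 0)
    (hQn : Q.natDegree ≤ n) {r s : ℝ} (hr : |r| ≤ 1 / 2) (hs : |s| ≤ 1 / 2) :
    toR Q ≠ r • toR (P k) + s • toR (P (k + 1)) := by
  intro h
  have hval : |aeval ξ Q| < |aeval ξ (P k)| := by
    have hlt := hP.abs_aeval_succ_lt k
    calc |aeval ξ Q| ≤ |r| * |aeval ξ (P k)| + |s| * |aeval ξ (P (k + 1))| := by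
          rw [aeval_eq_of_toR_eq h, ← abs_mul, ← abs_mul]
          exact abs_add_le _ _
      _ < |aeval ξ (P k)| := by nlinarith [abs_nonneg (aeval ξ (P (k + 1)))]
  have hheight : heightZ Q < heightZ (P (k + 1)) := by
    have hlt := hP.heightZ_lt_succ k
    have hpos := heightZ_pos (hP.ne_zero k)
    calc heightZ Q ≤ |r| * heightZ (P k) + |s| * heightZ (P (k + 1)) := heightZ_le_of_toR_eq h
      _ < heightZ (P (k + 1)) := by nlinarith
  exact (hP.heightZ_succ_le k hQ hQn hval).not_gt hheight

lemma linearIndependent_toR (hP : IsMinimalSeq n ξ P) (k : ℕ) :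
    LinearIndependent ℝ ![toR (P k), toR (P (k + 1))] := by
  refine (LinearIndependent.pair_iff' (toR_ne_zero (hP.ne_zero k))).mpr fun c hc ↦ ?_
  have hc' : toR (P (k + 1)) = c • toR (P k) + (0 : ℝ) • toR (P k) := by
    rw [hc, zero_smul, add_zero]
  have hval := hP.abs_aeval_succ_lt k
  rw [aeval_eq_of_toR_eq hc', zero_mul, add_zero, abs_mul] at hval
  have hc1 : |c| < 1 :=
    (mul_lt_iff_lt_one_left (abs_pos.mpr (hP.aeval_ne_zero k))).mp hval
  have hheight := heightZ_le_of_toR_eq hc'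
  rw [abs_zero, zero_mul, add_zero] at hheight
  have := mul_lt_of_lt_one_left (heightZ_pos (hP.ne_zero k)) hc1
  linarith [hP.heightZ_lt_succ k]

lemma linearIndependent (hP : IsMinimalSeq n ξ P) (k : ℕ) :
    LinearIndependent ℤ ![P k, P (k + 1)] := by
  refine LinearIndependent.pair_iff.mpr fun a b hab ↦ ?_
  have := congrArg toR hab
  rw [toR_zsmul_add_zsmul] at this
  obtain ⟨ha, hb⟩ := LinearIndependent.pair_iff.mp (hP.linearIndependent_toR k) _ _
    (by simpa [toR] using this)
  exact ⟨by exact_mod_cast ha, by exact_mod_cast hb⟩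

lemma span_toR_eq (hP : IsMinimalSeq n ξ P) (k : ℕ) {V : Submodule ℝ ℝ[X]}
    (hV : Module.finrank ℝ V = 2) (hk : toR (P k) ∈ V) (hk' : toR (P (k + 1)) ∈ V) :
    Submodule.span ℝ {toR (P k), toR (P (k + 1))} = V := by
  have := Module.finite_of_finrank_eq_succ hV
  refine Submodule.eq_of_le_of_finrank_eq (Submodule.span_le.mpr ?_) ?_
  · rintro _ (rfl | rfl) <;> assumption
  · rw [hV, ← Matrix.range_cons_cons_empty _ _ ![], finrank_span_eq_card
      (hP.linearIndependent_toR k), Fintype.card_fin]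

/-- Rounding the real coefficients leaves a small combination, which must vanish by
`not_toR_eq_small_comb`. -/
lemma exists_eq_zsmul_add_zsmul (hP : IsMinimalSeq n ξ P) (k : ℕ) {Q : ℤ[X]}
    (hQn : Q.natDegree ≤ n) (hQ : toR Q ∈ Submodule.span ℝ {toR (P k), toR (P (k + 1))}) :
    ∃ a b : ℤ, Q = a • P k + b • P (k + 1) := by
  obtain ⟨r, s, hrs⟩ := Submodule.mem_span_pair.mp hQ
  refine ⟨round r, round s, sub_eq_zero.mp ?_⟩
  by_contra hne
  refine hP.not_toR_eq_small_comb k hne ?_ (abs_sub_round r) (abs_sub_round s) ?_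
  · refine (natDegree_sub_le _ _).trans (max_le hQn ((natDegree_add_le _ _).trans (max_le ?_ ?_)))
    · exact (natDegree_smul_le _ _).trans (hP.natDegree_le k)
    · exact (natDegree_smul_le _ _).trans (hP.natDegree_le (k + 1))
  · rw [toR_sub, toR_zsmul_add_zsmul, ← hrs]
    module

/-- In a plane containing three consecutive terms, both consecutive pairs are bases of the
same lattice, so the transition matrix `!![0, 1; a, b]` is unimodular and `a = ± 1`. -/
lemma crossEval_succ_eq_or_eq_neg (hP : IsMinimalSeq n ξ P) (k : ℕ) {V : Submodule ℝ ℝ[X]}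
    (hV : Module.finrank ℝ V = 2) (h₀ : toR (P k) ∈ V) (h₁ : toR (P (k + 1)) ∈ V)
    (h₂ : toR (P (k + 2)) ∈ V) :
    crossEval ξ (P (k + 1)) (P (k + 2)) = crossEval ξ (P k) (P (k + 1)) ∨
      crossEval ξ (P (k + 1)) (P (k + 2)) = -crossEval ξ (P k) (P (k + 1)) := by
  obtain ⟨a, b, hab⟩ := hP.exists_eq_zsmul_add_zsmul k (hP.natDegree_le (k + 2))
    (hP.span_toR_eq k hV h₀ h₁ ▸ h₂)
  obtain ⟨c, d, hcd⟩ := hP.exists_eq_zsmul_add_zsmul (k + 1) (hP.natDegree_le k)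
    (hP.span_toR_eq (k + 1) hV h₁ h₂ ▸ h₀)
  have hda : d * a = 1 := by
    have h0 : (d * a - 1) • P k + (c + d * b) • P (k + 1) = 0 := by
      rw [hab] at hcd
      linear_combination (norm := module) (-1 : ℤ) • hcd
    have := (LinearIndependent.pair_iff.mp (hP.linearIndependent k) _ _ h0).1
    omega
  rw [hab, crossEval_zsmul_add_zsmul]
  rcases Int.eq_one_or_neg_one_of_mul_eq_one' hda with ⟨-, rfl⟩ | ⟨-, rfl⟩ <;> simp

end IsMinimalSeq

theorem S_eq_pm_general (n : ℕ) (ξ : ℝ)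
    (P : ℕ → Polynomial ℤ) (hP : IsMinimalSeq n ξ P) (i j : ℕ) (hij : i < j)
    (hdim : Module.finrank ℝ
      (Submodule.span ℝ {R : Polynomial ℝ | ∃ k ∈ Set.Icc i j, R = toR (P k)}) = 2) :
    (fun k : ℕ => (Polynomial.aeval ξ (P k)) • toR (P (k + 1)) -
        (Polynomial.aeval ξ (P (k + 1))) • toR (P k)) (j - 1) =
      (fun k : ℕ => (Polynomial.aeval ξ (P k)) • toR (P (k + 1)) -
        (Polynomial.aeval ξ (P (k + 1))) • toR (P k)) i ∨
    (fun k : ℕ => (Polynomial.aeval ξ (P k)) • toR (P (k + 1)) -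
        (Polynomial.aeval ξ (P (k + 1))) • toR (P k)) (j - 1) =
      -(fun k : ℕ => (Polynomial.aeval ξ (P k)) • toR (P (k + 1)) -
        (Polynomial.aeval ξ (P (k + 1))) • toR (P k)) i := by
  have hmem : ∀ k, i ≤ k → k ≤ j → toR (P k) ∈
      Submodule.span ℝ {R : Polynomial ℝ | ∃ k ∈ Set.Icc i j, R = toR (P k)} :=
    fun k hik hkj ↦ Submodule.subset_span ⟨k, ⟨hik, hkj⟩, rfl⟩
  refine eq_or_eq_neg_of_forall_succ (f := fun k ↦ crossEval ξ (P k) (P (k + 1))) (by omega)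
    fun k hik hkj ↦ ?_
  exact hP.crossEval_succ_eq_or_eq_neg k hdim (hmem k hik (by omega))
    (hmem (k + 1) (by omega) (by omega)) (hmem (k + 2) (by omega) (by omega))

/-- If the span of `P_i, …, P_j` has dimension `2`, then `S_{j-1} = ± S_i`, where
`S_k = P_k(ξ) P_{k+1} - P_{k+1}(ξ) P_k`. -/
theorem S_eq_pm (n : ℕ) (hn : 1 ≤ n) (ξ : ℝ) (hξ : Transcendental ℚ ξ)
    (P : ℕ → Polynomial ℤ) (hP : IsMinimalSeq n ξ P) (i j : ℕ) (hij : i < j)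
    (hdim : Module.finrank ℝ
      (Submodule.span ℝ {R : Polynomial ℝ | ∃ k ∈ Set.Icc i j, R = toR (P k)}) = 2) :
    (fun k : ℕ => (Polynomial.aeval ξ (P k)) • toR (P (k + 1)) -
        (Polynomial.aeval ξ (P (k + 1))) • toR (P k)) (j - 1) =
      (fun k : ℕ => (Polynomial.aeval ξ (P k)) • toR (P (k + 1)) -
        (Polynomial.aeval ξ (P (k + 1))) • toR (P k)) i ∨
    (fun k : ℕ => (Polynomial.aeval ξ (P k)) • toR (P (k + 1)) -
        (Polynomial.aeval ξ (P (k + 1))) • toR (P k)) (j - 1) =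
      -(fun k : ℕ => (Polynomial.aeval ξ (P k)) • toR (P (k + 1)) -
        (Polynomial.aeval ξ (P (k + 1))) • toR (P k)) i :=
  S_eq_pm_general n ξ P hP i j hij hdim
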